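/- Assume |c₁| = C, |c_s| ≤ (C/s) C_r^{s−1} for s = 2,...,r, where C_r = 64 r² C_*, and assume ρ < R* with (R*)² = 2/(3(1+e)C_r). Then the Lagrange multiplier λ₀ = 2 Σ_{s=1}^r s c_s ρ^{2s} (with c₁ > 0) satisfies |λ₀| ≥ 2Cρ² − 2 Σ_{s=2}^r s|c_s|ρ^{2s} > (5/7) C ρ². -/

import Mathlib

/-! With `q = C_r ρ²`, the hypothesis `ρ < R*` gives `q < 2 / (3(1+e)) < 2/11`. The coefficient
bounds make the `s`-th tail term at most `C ρ² q^(s-1)`, so the tail is dominated by a geometric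
series and stays below `(2/9) C ρ²`; the reverse triangle inequality then isolates the leading
term `2 c₁ ρ²` of `λ₀`. -/

open Finset

lemma mul_sq_mem_Ioo_of_lt_sqrt {K ρ : ℝ} (hρ : 0 < ρ)
    (hρK : ρ < √(2 / (3 * (1 + Real.exp 1) * K))) : K * ρ ^ 2 ∈ Set.Ioo 0 (2 / 11) := by
  have hden : 0 < 3 * (1 + Real.exp 1) * K :=
    (div_pos_iff_of_pos_left two_pos).mp (Real.sqrt_pos.mp (hρ.trans hρK))
  have hK : 0 < K := pos_of_mul_pos_right hden (by positivity)
  have hρ2 : ρ ^ 2 < 2 / (3 * (1 + Real.exp 1) * K) := (Real.lt_sqrt hρ.le).mp hρK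
  refine ⟨by positivity, ?_⟩
  calc K * ρ ^ 2 < K * (2 / (3 * (1 + Real.exp 1) * K)) := by gcongr
    _ = 2 / (3 * (1 + Real.exp 1)) := by field_simp
    _ < 2 / 11 := by
      gcongr
      linarith [Real.exp_one_gt_d9]

lemma sum_Icc_two_pow_sub_one_le {q : ℝ} (hq₀ : 0 ≤ q) (hq₁ : q < 1) (r : ℕ) :
    ∑ s ∈ Icc 2 r, q ^ (s - 1) ≤ q / (1 - q) := by
  rw [← Ico_add_one_right_eq_Icc, ← sum_Ico_add' (fun s ↦ q ^ (s - 1)) 1 r 1]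
  simpa using geom_sum_Ico_le_of_lt_one (m := 1) (n := r) hq₀ hq₁

lemma nat_mul_abs_mul_pow_le {C K ρ a : ℝ} {s : ℕ} (hs : 1 ≤ s)
    (ha : |a| ≤ C / s * K ^ (s - 1)) :
    s * |a| * ρ ^ (2 * s) ≤ C * ρ ^ 2 * (K * ρ ^ 2) ^ (s - 1) := by
  have hsa : s * |a| ≤ C * K ^ (s - 1) := by
    rw [div_mul_eq_mul_div, le_div_iff₀ (by positivity)] at ha
    linarith
  obtain ⟨t, rfl⟩ : ∃ t, s = t + 1 := ⟨s - 1, by omega⟩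
  calc ((t + 1 : ℕ) : ℝ) * |a| * ρ ^ (2 * (t + 1)) = _ * (ρ ^ 2) ^ (t + 1) := by rw [pow_mul]
    _ ≤ C * K ^ (t + 1 - 1) * (ρ ^ 2) ^ (t + 1) := by gcongr
    _ = C * ρ ^ 2 * (K * ρ ^ 2) ^ (t + 1 - 1) := by simp only [add_tsub_cancel_right]; ring

lemma sum_Icc_two_nat_mul_abs_mul_pow_lt {r : ℕ} {C K ρ : ℝ} {c : ℕ → ℝ}
    (hC : 0 < C) (hρ : 0 < ρ) (hq : K * ρ ^ 2 ∈ Set.Ico 0 (2 / 11))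
    (hc : ∀ s ∈ Icc 2 r, |c s| ≤ C / s * K ^ (s - 1)) :
    ∑ s ∈ Icc 2 r, s * |c s| * ρ ^ (2 * s) < 2 / 9 * (C * ρ ^ 2) := by
  obtain ⟨hq₀, hq₁⟩ := hq
  calc ∑ s ∈ Icc 2 r, s * |c s| * ρ ^ (2 * s)
      ≤ ∑ s ∈ Icc 2 r, C * ρ ^ 2 * (K * ρ ^ 2) ^ (s - 1) :=
        sum_le_sum fun s hs ↦ nat_mul_abs_mul_pow_le (by grind) (hc s hs)
    _ = C * ρ ^ 2 * ∑ s ∈ Icc 2 r, (K * ρ ^ 2) ^ (s - 1) := by rw [mul_sum]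
    _ ≤ C * ρ ^ 2 * (K * ρ ^ 2 / (1 - K * ρ ^ 2)) := by
        gcongr
        exact sum_Icc_two_pow_sub_one_le hq₀ (by linarith) r
    _ < C * ρ ^ 2 * (2 / 9) := by
        refine mul_lt_mul_of_pos_left ?_ (by positivity)
        rw [div_lt_iff₀ (by linarith)]
        linarith
    _ = 2 / 9 * (C * ρ ^ 2) := mul_comm _ _

lemma two_mul_abs_mul_sq_sub_le_abs_two_mul_sum {r : ℕ} (hr : 1 ≤ r) (c : ℕ → ℝ) (ρ : ℝ) :
    2 * |c 1| * ρ ^ 2 - 2 * ∑ s ∈ Icc 2 r, s * |c s| * ρ ^ (2 * s) ≤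
      |2 * ∑ s ∈ Icc 1 r, s * c s * ρ ^ (2 * s)| := by
  have hsplit : ∑ s ∈ Icc 1 r, s * c s * ρ ^ (2 * s) =
      c 1 * ρ ^ 2 + ∑ s ∈ Icc 2 r, s * c s * ρ ^ (2 * s) := by
    rw [← insert_Icc_add_one_left_eq_Icc hr, sum_insert (by simp)]
    simp
  have htail : |∑ s ∈ Icc 2 r, s * c s * ρ ^ (2 * s)| ≤
      ∑ s ∈ Icc 2 r, s * |c s| * ρ ^ (2 * s) := by
    refine (abs_sum_le_sum_abs _ _).trans_eq (sum_congr rfl fun s _ ↦ ?_)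
    rw [abs_mul, abs_mul, Nat.abs_cast,
      abs_of_nonneg (show 0 ≤ ρ ^ (2 * s) by rw [pow_mul]; positivity)]
  have := abs_sub_abs_le_abs_sub (2 * (c 1 * ρ ^ 2)) (-(2 * ∑ s ∈ Icc 2 r, s * c s * ρ ^ (2 * s)))
  rw [sub_neg_eq_add, ← mul_add, abs_neg, abs_mul, abs_mul, abs_mul, abs_two,
    abs_of_nonneg (sq_nonneg ρ)] at this
  rw [hsplit]
  linarith

theorem lagrange_multiplier_lower_bound_general (r : ℕ) (hr : 1 ≤ r)
    (C : ℝ) (hC : 0 < C)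
    (Cr : ℝ)
    (c : ℕ → ℝ) (hc1 : |c 1| = C)
    (hcs : ∀ s ∈ Finset.Icc 2 r, |c s| ≤ C / (s : ℝ) * Cr ^ (s - 1))
    (ρ Rstar : ℝ) (hρ : 0 < ρ)
    (hRstar : Rstar = Real.sqrt (2 / (3 * (1 + Real.exp 1) * Cr)))
    (hρR : ρ < Rstar)
    (lam₀ : ℝ)
    (hlam₀ : lam₀ = 2 * ∑ s ∈ Finset.Icc 1 r, (s : ℝ) * c s * ρ ^ (2*s)) :
    |lam₀| ≥ 2 * C * ρ^2 - 2 * ∑ s ∈ Finset.Icc 2 r, (s : ℝ) * |c s| * ρ ^ (2*s) ∧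
    2 * C * ρ^2 - 2 * ∑ s ∈ Finset.Icc 2 r, (s : ℝ) * |c s| * ρ ^ (2*s)
      > (5/7) * C * ρ^2 := by
  subst hRstar hlam₀ hc1
  have htail := sum_Icc_two_nat_mul_abs_mul_pow_lt hC hρ
    (Set.Ioo_subset_Ico_self (mul_sq_mem_Ioo_of_lt_sqrt hρ hρR)) hcs
  refine ⟨two_mul_abs_mul_sq_sub_le_abs_two_mul_sum hr c ρ, ?_⟩
  linarith [mul_pos hC (pow_pos hρ 2)]

/-- Under the Birkhoff-coefficient bounds |c₁| = C, |c_s| ≤ (C/s)C_r^{s−1}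
(C_r = 64r²C_*), and the smallness condition ρ < R* with
(R*)² = 2/(3(1+e)C_r), the Lagrange multiplier λ₀ = 2Σ_{s=1}^r s c_s ρ^{2s}
satisfies |λ₀| ≥ 2Cρ² − 2Σ_{s=2}^r s|c_s|ρ^{2s} > (5/7)Cρ². -/
theorem lagrange_multiplier_lower_bound (r : ℕ) (hr : 1 ≤ r)
    (C Cstar : ℝ) (hC : 0 < C) (hCstar : 0 < Cstar)
    (Cr : ℝ) (hCr : Cr = 64 * (r : ℝ)^2 * Cstar)
    (c : ℕ → ℝ) (hc1 : |c 1| = C) (hc1pos : 0 < c 1)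
    (hcs : ∀ s ∈ Finset.Icc 2 r, |c s| ≤ C / (s : ℝ) * Cr ^ (s - 1))
    (ρ Rstar : ℝ) (hρ : 0 < ρ)
    (hRstar : Rstar = Real.sqrt (2 / (3 * (1 + Real.exp 1) * Cr)))
    (hρR : ρ < Rstar)
    (lam₀ : ℝ)
    (hlam₀ : lam₀ = 2 * ∑ s ∈ Finset.Icc 1 r, (s : ℝ) * c s * ρ ^ (2*s)) :
    |lam₀| ≥ 2 * C * ρ^2 - 2 * ∑ s ∈ Finset.Icc 2 r, (s : ℝ) * |c s| * ρ ^ (2*s) ∧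
    2 * C * ρ^2 - 2 * ∑ s ∈ Finset.Icc 2 r, (s : ℝ) * |c s| * ρ ^ (2*s)
      > (5/7) * C * ρ^2 :=
  lagrange_multiplier_lower_bound_general r hr C hC Cr c hc1 hcs ρ Rstar hρ hRstar hρR lam₀ hlam₀
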